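/- If R and R' are ribbons, each with N boxes, having different numbers of nonempty rows, then neither s_R − s_{R'} nor s_{R'} − s_R is Schur-positive. -/

import Mathlib

/-- A skew shape `outer / inner`: the boxes of the Young diagram of `outer`
that are not boxes of the Young diagram of `inner`. -/
structure SkewShape where
  outer : YoungDiagram
  inner : YoungDiagram
  inner_le : inner ≤ outer

namespace SkewShape

/-- The set of boxes of a skew shape. -/
def cells (A : SkewShape) : Finset (ℕ × ℕ) := A.outer.cells \ A.inner.cells

/-- The size of a skew shape is its number of boxes. -/
def size (A : SkewShape) : ℕ := A.cells.card

/-- The length of row `i` of a skew shape. -/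
def rowLen (A : SkewShape) (i : ℕ) : ℕ := (A.cells.filter fun c => c.1 = i).card

/-- The length of column `j` of a skew shape. -/
def colLen (A : SkewShape) (j : ℕ) : ℕ := (A.cells.filter fun c => c.2 = j).card

/-- The set of indices of nonempty rows. -/
def rowSet (A : SkewShape) : Finset ℕ := A.cells.image Prod.fst

/-- The set of indices of nonempty columns. -/
def colSet (A : SkewShape) : Finset ℕ := A.cells.image Prod.snd

/-- The number of nonempty rows. -/
def numRows (A : SkewShape) : ℕ := A.rowSet.card

/-- The number of nonempty columns. -/
def numCols (A : SkewShape) : ℕ := A.colSet.card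

/-- `rows A`: the multiset of lengths of the nonempty rows of `A`
(equivalently, that sequence sorted into weakly decreasing order). -/
def rows (A : SkewShape) : Multiset ℕ := A.rowSet.val.map A.rowLen

/-- `cols A`: the multiset of lengths of the nonempty columns of `A`. -/
def cols (A : SkewShape) : Multiset ℕ := A.colSet.val.map A.colLen

/-- A skew shape is disconnected if its boxes can be split into two nonempty
parts such that no box of one part shares a row or a column with a box of the
other part. -/
def Disconnected (A : SkewShape) : Prop :=
  ∃ B C : Finset (ℕ × ℕ), B.Nonempty ∧ C.Nonempty ∧ B ∪ C = A.cells ∧ B ∩ C = ∅ ∧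
    ∀ b ∈ B, ∀ c ∈ C, b.1 ≠ c.1 ∧ b.2 ≠ c.2

/-- A skew shape is connected if it is nonempty and not disconnected. -/
def Connected (A : SkewShape) : Prop := A.cells.Nonempty ∧ ¬ A.Disconnected

/-- A ribbon is a connected skew shape containing no 2×2 block of boxes. -/
def Ribbon (A : SkewShape) : Prop :=
  A.Connected ∧ ∀ i j : ℕ, ¬ ((i, j) ∈ A.cells ∧ (i, j + 1) ∈ A.cells ∧
    (i + 1, j) ∈ A.cells ∧ (i + 1, j + 1) ∈ A.cells)

/-- The lengths of any two nonempty rows differ by at most one. -/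
def RowEquitable (A : SkewShape) : Prop :=
  ∀ i ∈ A.rowSet, ∀ i' ∈ A.rowSet, A.rowLen i ≤ A.rowLen i' + 1

/-- The lengths of any two nonempty columns differ by at most one. -/
def ColEquitable (A : SkewShape) : Prop :=
  ∀ j ∈ A.colSet, ∀ j' ∈ A.colSet, A.colLen j ≤ A.colLen j' + 1

/-- Equitable: both row equitable and column equitable. -/
def Equitable (A : SkewShape) : Prop := A.RowEquitable ∧ A.ColEquitable

/-- A filling of a skew shape is semistandard if its entries are positive
integers, weakly increasing along rows and strictly increasing down columns. -/
def IsSsyt (A : SkewShape) (T : ℕ × ℕ → ℕ) : Prop :=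
  (∀ c ∈ A.cells, 1 ≤ T c) ∧
  (∀ i j j', (i, j) ∈ A.cells → (i, j') ∈ A.cells → j ≤ j' → T (i, j) ≤ T (i, j')) ∧
  (∀ i i' j, (i, j) ∈ A.cells → (i', j) ∈ A.cells → i < i' → T (i, j) < T (i', j))

end SkewShape

/-- `c` comes weakly before `d` in the reverse reading order (right to left
along rows, rows top to bottom). -/
def ReadsBefore (c d : ℕ × ℕ) : Prop := c.1 < d.1 ∨ (c.1 = d.1 ∧ d.2 ≤ c.2)

instance : DecidableRel ReadsBefore := fun c d => by unfold ReadsBefore; infer_instance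

namespace SkewShape

/-- The number of boxes of `A` filled with the entry `k` by the filling `T`. -/
def content (A : SkewShape) (T : ℕ × ℕ → ℕ) (k : ℕ) : ℕ :=
  (A.cells.filter fun c => T c = k).card

/-- A Littlewood--Richardson filling: a semistandard filling such that every
prefix of the reverse reading word contains at least as many `k`'s as
`(k+1)`'s, for every positive `k`. -/
def IsLR (A : SkewShape) (T : ℕ × ℕ → ℕ) : Prop :=
  A.IsSsyt T ∧ ∀ d ∈ A.cells, ∀ k : ℕ,
    (A.cells.filter fun c => T c = k + 2 ∧ ReadsBefore c d).card ≤
    (A.cells.filter fun c => T c = k + 1 ∧ ReadsBefore c d).card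

end SkewShape

/-- The `i`-th largest part (0-indexed) of a multiset of natural numbers,
i.e. the `i`-th entry of the multiset sorted into weakly decreasing order. -/
def part (lam : Multiset ℕ) (i : ℕ) : ℕ := (lam.sort (· ≥ ·)).getD i 0

namespace SkewShape

/-- The support of a skew shape `A`: the set of partitions `lam` (multisets of
positive integers) for which there exists an LR filling of `A` of content `lam`. -/
def supp (A : SkewShape) : Set (Multiset ℕ) :=
  {lam | 0 ∉ lam ∧ ∃ T : ℕ × ℕ → ℕ, A.IsLR T ∧ ∀ i : ℕ, A.content T (i + 1) = part lam i}

/-- The set of LR fillings of `A` of content `lam` (normalized to vanish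
outside the boxes of `A`). -/
def LRset (A : SkewShape) (lam : Multiset ℕ) : Set ((ℕ × ℕ) → ℕ) :=
  {T | A.IsLR T ∧ (∀ c, c ∉ A.cells → T c = 0) ∧ ∀ i : ℕ, A.content T (i + 1) = part lam i}

/-- `s_A − s_B` is Schur-positive: for every partition, the number of LR
fillings of `B` of that content is at most the number for `A`. -/
def SchurPosDiff (A B : SkewShape) : Prop :=
  ∀ lam : Multiset ℕ, (B.LRset lam).ncard ≤ (A.LRset lam).ncard

end SkewShape

/-- The sum of the `k` largest parts of a multiset of natural numbers. -/
def psum (lam : Multiset ℕ) (k : ℕ) : ℕ := ((lam.sort (· ≥ ·)).take k).sum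

/-- Dominance order: `DomLe lam mu` means `lam ⊴ mu`, i.e. for every `k` the
sum of the `k` largest parts of `lam` is at most that of `mu`. -/
def DomLe (lam mu : Multiset ℕ) : Prop := ∀ k : ℕ, psum lam k ≤ psum mu k

/-- The conjugate (transpose) of a partition given as a multiset: its parts
are the numbers `#{x ∈ lam | x ≥ j}` for `j = 1, 2, …`. -/
def conj (lam : Multiset ℕ) : Multiset ℕ :=
  ((Finset.range lam.sum).val.map fun j => Multiset.card (lam.filter fun x => j + 1 ≤ x)).filter
    fun y => y ≠ 0

namespace SkewShape

variable (A : SkewShape)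

lemma mem_cells_iff {c : ℕ × ℕ} : c ∈ A.cells ↔ c ∈ A.outer ∧ c ∉ A.inner := by
  simp [cells, Finset.mem_sdiff, YoungDiagram.mem_cells]

lemma col_contig {i t i' j : ℕ} (h1 : (i, j) ∈ A.cells) (h2 : (i', j) ∈ A.cells)
    (hit : i ≤ t) (hti : t ≤ i') : (t, j) ∈ A.cells := by
  rw [mem_cells_iff] at h1 h2 ⊢
  exact ⟨A.outer.up_left_mem hti le_rfl h2.1,
    fun hin => h1.2 (A.inner.up_left_mem hit le_rfl hin)⟩

lemma no_above_left
    (h22 : ∀ i j : ℕ, ¬ ((i, j) ∈ A.cells ∧ (i, j + 1) ∈ A.cells ∧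
      (i + 1, j) ∈ A.cells ∧ (i + 1, j + 1) ∈ A.cells))
    {i j j' : ℕ} (hj : j < j') (h1 : (i + 1, j) ∈ A.cells) (h2 : (i + 1, j') ∈ A.cells)
    (h0 : (i, j) ∈ A.cells) : False := by
  apply h22 i j
  rw [mem_cells_iff] at h1 h2 h0
  have hij1 : (i, j + 1) ∈ A.cells := by
    rw [mem_cells_iff]
    exact ⟨A.outer.up_left_mem (Nat.le_succ i) hj h2.1,
      fun hin => h0.2 (A.inner.up_left_mem le_rfl (Nat.le_succ j) hin)⟩
  have hi1j1 : (i + 1, j + 1) ∈ A.cells := by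
    rw [mem_cells_iff]
    exact ⟨A.outer.up_left_mem le_rfl hj h2.1,
      fun hin => h1.2 (A.inner.up_left_mem le_rfl (Nat.le_succ j) hin)⟩
  exact ⟨A.mem_cells_iff.mpr h0, hij1, A.mem_cells_iff.mpr h1, hi1j1⟩

end SkewShape
namespace SkewShape

variable (A : SkewShape)

/-- The rank of row `i`: the number of nonempty rows with index at most `i`. -/
def rnk (i : ℕ) : ℕ := (A.rowSet.filter (· ≤ i)).card

/-- The canonical hook filling of a ribbon. -/
def hookT : ℕ × ℕ → ℕ := fun c =>
  if c ∈ A.cells then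
    (if c.1 ≠ 0 ∧ (c.1 - 1, c.2) ∈ A.cells then A.rnk c.1 else 1) else 0

/-- The hook partition of a skew shape. -/
def hookLam : Multiset ℕ := A.numCols ::ₘ Multiset.replicate (A.numRows - 1) 1

lemma fst_mem_rowSet {c : ℕ × ℕ} (hc : c ∈ A.cells) : c.1 ∈ A.rowSet :=
  Finset.mem_image.mpr ⟨c, hc, rfl⟩

lemma snd_mem_colSet {c : ℕ × ℕ} (hc : c ∈ A.cells) : c.2 ∈ A.colSet :=
  Finset.mem_image.mpr ⟨c, hc, rfl⟩

lemma rnk_pos {i : ℕ} (hi : i ∈ A.rowSet) : 1 ≤ A.rnk i :=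
  Finset.card_pos.mpr ⟨i, Finset.mem_filter.mpr ⟨hi, le_rfl⟩⟩

lemma rnk_le_numRows (i : ℕ) : A.rnk i ≤ A.numRows :=
  Finset.card_le_card (Finset.filter_subset _ _)

lemma rnk_strict_mono {i i' : ℕ} (hi' : i' ∈ A.rowSet) (h : i < i') :
    A.rnk i < A.rnk i' := by
  apply Finset.card_lt_card
  constructor
  · intro x hx
    rw [Finset.mem_filter] at hx ⊢
    exact ⟨hx.1, le_trans hx.2 (le_of_lt h)⟩
  · intro hsub
    have : i' ∈ A.rowSet.filter (· ≤ i) := hsub (Finset.mem_filter.mpr ⟨hi', le_rfl⟩)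
    rw [Finset.mem_filter] at this
    omega

lemma rnk_inj {i i' : ℕ} (hi : i ∈ A.rowSet) (hi' : i' ∈ A.rowSet)
    (h : A.rnk i = A.rnk i') : i = i' := by
  rcases lt_trichotomy i i' with hl | he | hl
  · have := A.rnk_strict_mono hi' hl; omega
  · exact he
  · have := A.rnk_strict_mono hi hl; omega

lemma nontop_rnk_ge_two {c : ℕ × ℕ} (hc : c ∈ A.cells) (h0 : c.1 ≠ 0)
    (ha : (c.1 - 1, c.2) ∈ A.cells) : 2 ≤ A.rnk c.1 := by
  have h1 : c.1 - 1 ∈ A.rowSet := A.fst_mem_rowSet ha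
  have h2 := A.rnk_pos h1
  have h3 := A.rnk_strict_mono (A.fst_mem_rowSet hc) (show c.1 - 1 < c.1 by omega)
  omega

lemma hookT_of_nontop {c : ℕ × ℕ} (hc : c ∈ A.cells) (h0 : c.1 ≠ 0)
    (ha : (c.1 - 1, c.2) ∈ A.cells) : A.hookT c = A.rnk c.1 := by
  simp [hookT, hc, h0, ha]

lemma hookT_of_top {c : ℕ × ℕ} (hc : c ∈ A.cells)
    (ha : ¬ (c.1 ≠ 0 ∧ (c.1 - 1, c.2) ∈ A.cells)) : A.hookT c = 1 := by
  simp only [hookT, if_pos hc, if_neg ha]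

lemma hookT_le {c : ℕ × ℕ} (hc : c ∈ A.cells) : A.hookT c ≤ A.rnk c.1 := by
  by_cases h : c.1 ≠ 0 ∧ (c.1 - 1, c.2) ∈ A.cells
  · rw [A.hookT_of_nontop hc h.1 h.2]
  · rw [A.hookT_of_top hc h]; exact A.rnk_pos (A.fst_mem_rowSet hc)

lemma hookT_pos {c : ℕ × ℕ} (hc : c ∈ A.cells) : 1 ≤ A.hookT c := by
  by_cases h : c.1 ≠ 0 ∧ (c.1 - 1, c.2) ∈ A.cells
  · rw [A.hookT_of_nontop hc h.1 h.2]; exact A.rnk_pos (A.fst_mem_rowSet hc)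
  · rw [A.hookT_of_top hc h]

lemma hookT_eq_one_iff {c : ℕ × ℕ} (hc : c ∈ A.cells) :
    A.hookT c = 1 ↔ ¬ (c.1 ≠ 0 ∧ (c.1 - 1, c.2) ∈ A.cells) := by
  constructor
  · intro h1 hnt
    rw [A.hookT_of_nontop hc hnt.1 hnt.2] at h1
    have := A.nontop_rnk_ge_two hc hnt.1 hnt.2
    omega
  · exact A.hookT_of_top hc

end SkewShape
namespace SkewShape

variable (A : SkewShape)

/-- At most one non-top box per row. -/
lemma nontop_unique
    (h22 : ∀ i j : ℕ, ¬ ((i, j) ∈ A.cells ∧ (i, j + 1) ∈ A.cells ∧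
      (i + 1, j) ∈ A.cells ∧ (i + 1, j + 1) ∈ A.cells))
    {i j j' : ℕ} (h1 : (i, j) ∈ A.cells) (h2 : (i, j') ∈ A.cells)
    (hn1 : i ≠ 0 ∧ (i - 1, j) ∈ A.cells) (hn2 : i ≠ 0 ∧ (i - 1, j') ∈ A.cells) :
    j = j' := by
  obtain ⟨m, rfl⟩ : ∃ m, i = m + 1 := ⟨i - 1, by omega⟩
  simp only [Nat.add_sub_cancel] at hn1 hn2
  rcases lt_trichotomy j j' with h | h | h
  · exact absurd (A.no_above_left h22 h h1 h2 hn1.2) (by simp)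
  · exact h
  · exact absurd (A.no_above_left h22 h h2 h1 hn2.2) (by simp)

lemma hookT_isSsyt
    (h22 : ∀ i j : ℕ, ¬ ((i, j) ∈ A.cells ∧ (i, j + 1) ∈ A.cells ∧
      (i + 1, j) ∈ A.cells ∧ (i + 1, j + 1) ∈ A.cells)) :
    A.IsSsyt A.hookT := by
  refine ⟨fun c hc => A.hookT_pos hc, ?_, ?_⟩
  · intro i j j' h1 h2 hle
    rcases eq_or_lt_of_le hle with rfl | hlt
    · exact le_rfl
    by_cases hnt : (i, j') ∈ A.cells ∧ ((i, j') : ℕ × ℕ).1 ≠ 0 ∧ (i - 1, j') ∈ A.cells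
    · rw [A.hookT_of_nontop h2 hnt.2.1 hnt.2.2]
      exact A.hookT_le h1
    · have ht2 : A.hookT (i, j') = 1 := by
        apply A.hookT_of_top h2
        intro hcon
        exact hnt ⟨h2, hcon.1, hcon.2⟩
      rw [ht2]
      have ht1 : A.hookT (i, j) = 1 := by
        apply A.hookT_of_top h1
        rintro ⟨h0, ha⟩
        obtain ⟨m, rfl⟩ : ∃ m, i = m + 1 := ⟨i - 1, by omega⟩
        simp only [Nat.add_sub_cancel] at ha
        exact A.no_above_left h22 hlt h1 h2 ha
      rw [ht1]
  · intro i i' j h1 h2 hlt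
    have h3 : (i' - 1, j) ∈ A.cells := A.col_contig h1 h2 (by omega) (by omega)
    have h0 : i' ≠ 0 := by omega
    rw [A.hookT_of_nontop h2 h0 h3]
    calc A.hookT (i, j) ≤ A.rnk i := A.hookT_le h1
      _ < A.rnk i' := A.rnk_strict_mono (A.fst_mem_rowSet h2) hlt

/-- Connectivity: if there are boxes in rows `≤ t` and in rows `> t`, then rows
`t` and `t+1` share a column. -/
lemma conn_rows (hc : A.Connected) {t : ℕ} (h1 : ∃ b ∈ A.cells, b.1 ≤ t)
    (h2 : ∃ c ∈ A.cells, t + 1 ≤ c.1) :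
    ∃ j, (t, j) ∈ A.cells ∧ (t + 1, j) ∈ A.cells := by
  by_contra h
  push_neg at h
  apply hc.2
  obtain ⟨b0, hb0, hb0t⟩ := h1
  obtain ⟨c0, hc0, hc0t⟩ := h2
  refine ⟨A.cells.filter (fun c => c.1 ≤ t), A.cells.filter (fun c => t + 1 ≤ c.1),
    ⟨b0, Finset.mem_filter.mpr ⟨hb0, hb0t⟩⟩, ⟨c0, Finset.mem_filter.mpr ⟨hc0, hc0t⟩⟩, ?_, ?_, ?_⟩
  · ext x
    simp only [Finset.mem_union, Finset.mem_filter]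
    by_cases hx : x ∈ A.cells <;> simp [hx] <;> omega
  · ext x
    simp only [Finset.mem_inter, Finset.mem_filter, Finset.notMem_empty, iff_false]
    omega
  · rintro ⟨b1, b2⟩ hb ⟨c1, c2⟩ hcc
    rw [Finset.mem_filter] at hb hcc
    constructor
    · simp only []
      omega
    · intro heq
      simp only [] at heq
      subst heq
      have ht : (t, b2) ∈ A.cells := A.col_contig hb.1 hcc.1 hb.2 (by omega)
      have ht1 : (t + 1, b2) ∈ A.cells := A.col_contig hb.1 hcc.1 (by omega) hcc.2
      exact h b2 ht ht1

lemma rowSet_nonempty (hc : A.Connected) : A.rowSet.Nonempty :=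
  ⟨hc.1.choose.1, A.fst_mem_rowSet hc.1.choose_spec⟩

/-- Every nonempty row other than the top one contains a non-top box. -/
lemma nontop_exists (hc : A.Connected) {i : ℕ} (hi : i ∈ A.rowSet)
    (hne : i ≠ A.rowSet.min' (A.rowSet_nonempty hc)) :
    ∃ j, (i, j) ∈ A.cells ∧ i ≠ 0 ∧ (i - 1, j) ∈ A.cells := by
  set i0 := A.rowSet.min' (A.rowSet_nonempty hc) with hi0
  have hmin : i0 ∈ A.rowSet := A.rowSet.min'_mem _
  have hle : i0 ≤ i := A.rowSet.min'_le _ hi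
  have hlt : i0 < i := by omega
  obtain ⟨b0, hb0, hb0i⟩ := Finset.mem_image.mp hmin
  obtain ⟨c0, hc0, hc0i⟩ := Finset.mem_image.mp hi
  obtain ⟨j, hj1, hj2⟩ := A.conn_rows hc (t := i - 1)
    ⟨b0, hb0, by omega⟩ ⟨c0, hc0, by omega⟩
  have : i - 1 + 1 = i := by omega
  rw [this] at hj2
  exact ⟨j, hj2, by omega, hj1⟩

/-- The rank of the top row is 1. -/
lemma rnk_min (hne : A.rowSet.Nonempty) : A.rnk (A.rowSet.min' hne) = 1 := by
  unfold rnk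
  have : A.rowSet.filter (· ≤ A.rowSet.min' hne) = {A.rowSet.min' hne} := by
    ext x
    simp only [Finset.mem_filter, Finset.mem_singleton]
    constructor
    · rintro ⟨hx, hxle⟩
      have := A.rowSet.min'_le _ hx
      omega
    · rintro rfl
      exact ⟨A.rowSet.min'_mem hne, le_rfl⟩
  rw [this, Finset.card_singleton]

lemma rnk_max (hne : A.rowSet.Nonempty) : A.rnk (A.rowSet.max' hne) = A.numRows := by
  unfold rnk numRows
  congr 1
  apply Finset.filter_true_of_mem
  intro x hx
  exact A.rowSet.le_max' x hx

lemma rnk_pred {i : ℕ} (hi : i ∈ A.rowSet) (h2 : 2 ≤ A.rnk i) :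
    ∃ i' ∈ A.rowSet, i' < i ∧ A.rnk i' + 1 = A.rnk i := by
  have hS : (A.rowSet.filter (· < i)).Nonempty := by
    rw [Finset.filter_nonempty_iff]
    by_contra h
    push_neg at h
    have hsub : A.rowSet.filter (· ≤ i) ⊆ {i} := by
      intro x hx
      rw [Finset.mem_filter] at hx
      rw [Finset.mem_singleton]
      have := h x hx.1
      omega
    have := Finset.card_le_card hsub
    rw [Finset.card_singleton] at this
    unfold rnk at h2
    omega
  set i' := (A.rowSet.filter (· < i)).max' hS with hi'
  have hmem : i' ∈ A.rowSet.filter (· < i) := Finset.max'_mem _ hS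
  rw [Finset.mem_filter] at hmem
  refine ⟨i', hmem.1, hmem.2, ?_⟩
  have heq : A.rowSet.filter (· ≤ i') = (A.rowSet.filter (· ≤ i)).erase i := by
    ext x
    simp only [Finset.mem_filter, Finset.mem_erase]
    constructor
    · rintro ⟨hx, hxle⟩
      exact ⟨by omega, hx, by omega⟩
    · rintro ⟨hxi, hx, hxle⟩
      have hxlt : x < i := by omega
      exact ⟨hx, (A.rowSet.filter (· < i)).le_max' x (Finset.mem_filter.mpr ⟨hx, hxlt⟩)⟩
  unfold rnk
  rw [heq]
  have hmemi : i ∈ A.rowSet.filter (· ≤ i) := Finset.mem_filter.mpr ⟨hi, le_rfl⟩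
  have := Finset.card_erase_of_mem hmemi
  have hpos := Finset.card_pos.mpr ⟨i, hmemi⟩
  unfold rnk at h2
  omega

lemma rnk_exists {m : ℕ} (h1 : 1 ≤ m) :
    ∀ i, i ∈ A.rowSet → m ≤ A.rnk i → ∃ i' ∈ A.rowSet, A.rnk i' = m := by
  intro i
  induction i using Nat.strong_induction_on with
  | _ i ih =>
    intro hi hm
    rcases eq_or_lt_of_le hm with h | h
    · exact ⟨i, hi, h.symm⟩
    · obtain ⟨i', hi', hlt, hr⟩ := A.rnk_pred hi (by omega)
      exact ih i' hlt hi' (by omega)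

end SkewShape
namespace SkewShape

variable (A : SkewShape)

/-- Boxes with the same hook entry `m ≥ 2` coincide. -/
lemma hookT_unique
    (h22 : ∀ i j : ℕ, ¬ ((i, j) ∈ A.cells ∧ (i, j + 1) ∈ A.cells ∧
      (i + 1, j) ∈ A.cells ∧ (i + 1, j + 1) ∈ A.cells))
    {m : ℕ} (hm : 2 ≤ m) {c c' : ℕ × ℕ} (hc : c ∈ A.cells) (hc' : c' ∈ A.cells)
    (h1 : A.hookT c = m) (h2 : A.hookT c' = m) : c = c' := by
  have hnt : c.1 ≠ 0 ∧ (c.1 - 1, c.2) ∈ A.cells := by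
    by_contra h
    rw [A.hookT_of_top hc h] at h1; omega
  have hnt' : c'.1 ≠ 0 ∧ (c'.1 - 1, c'.2) ∈ A.cells := by
    by_contra h
    rw [A.hookT_of_top hc' h] at h2; omega
  rw [A.hookT_of_nontop hc hnt.1 hnt.2] at h1
  rw [A.hookT_of_nontop hc' hnt'.1 hnt'.2] at h2
  have hrow : c.1 = c'.1 :=
    A.rnk_inj (A.fst_mem_rowSet hc) (A.fst_mem_rowSet hc') (by omega)
  obtain ⟨c1, c2⟩ := c
  obtain ⟨c1', c2'⟩ := c'
  have hrow' : c1 = c1' := hrow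
  subst hrow'
  have hcol : c2 = c2' := A.nontop_unique h22 hc hc' hnt hnt'
  rw [hcol]

/-- All 1-entries of the hook filling: exactly the column tops, one per column. -/
lemma content_hookT_one (hrib : A.Ribbon) : A.content A.hookT 1 = A.numCols := by
  have heq : A.cells.filter (fun c => A.hookT c = 1) =
      A.cells.filter (fun c => ¬ (c.1 ≠ 0 ∧ (c.1 - 1, c.2) ∈ A.cells)) := by
    apply Finset.filter_congr
    intro c hc
    exact A.hookT_eq_one_iff hc
  unfold content
  rw [heq]
  unfold numCols
  apply Finset.card_bij (fun c _ => c.2)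
  · intro c hcm
    rw [Finset.mem_filter] at hcm
    exact A.snd_mem_colSet hcm.1
  · intro c hcm c' hcm' heq2
    rw [Finset.mem_filter] at hcm hcm'
    obtain ⟨c1, c2⟩ := c
    obtain ⟨c1', c2'⟩ := c'
    have heq3 : c2 = c2' := heq2
    subst heq3
    rcases lt_trichotomy c1 c1' with h | h | h
    · exfalso
      apply hcm'.2
      refine ⟨by omega, A.col_contig hcm.1 hcm'.1 (by omega) (by omega)⟩
    · rw [h]
    · exfalso
      apply hcm.2
      refine ⟨by omega, A.col_contig hcm'.1 hcm.1 (by omega) (by omega)⟩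
  · intro j hj
    obtain ⟨c0, hc0, hc0j⟩ := Finset.mem_image.mp hj
    obtain ⟨b, hb, hbmin⟩ := Finset.exists_min_image (A.cells.filter (fun c => c.2 = j))
      Prod.fst ⟨c0, Finset.mem_filter.mpr ⟨hc0, hc0j⟩⟩
    rw [Finset.mem_filter] at hb
    refine ⟨b, Finset.mem_filter.mpr ⟨hb.1, ?_⟩, hb.2⟩
    rintro ⟨h0, ha⟩
    have : (b.1 - 1, b.2) ∈ A.cells.filter (fun c => c.2 = j) :=
      Finset.mem_filter.mpr ⟨ha, hb.2⟩
    have hmin2 := hbmin _ this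
    have : b.1 - 1 < b.1 := by omega
    omega

/-- Count of hook entries `k ≥ 2`. -/
lemma content_hookT_ge2 (hrib : A.Ribbon) {k : ℕ} (h2 : 2 ≤ k) :
    A.content A.hookT k = if k ≤ A.numRows then 1 else 0 := by
  have h22 := hrib.2
  have hne := A.rowSet_nonempty hrib.1
  unfold content
  split_ifs with hk
  · -- there is a row of rank k, with a unique nontop box
    obtain ⟨i, hi, hri⟩ := A.rnk_exists (m := k) (by omega) (A.rowSet.max' hne)
      (A.rowSet.max'_mem hne) (by rw [A.rnk_max hne]; exact hk)
    have hnei : i ≠ A.rowSet.min' hne := by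
      intro h
      rw [h, A.rnk_min hne] at hri
      omega
    obtain ⟨j, hij, h0, ha⟩ := A.nontop_exists hrib.1 hi hnei
    have hval : A.hookT (i, j) = k := by
      rw [A.hookT_of_nontop hij h0 ha, hri]
    have : A.cells.filter (fun c => A.hookT c = k) = {(i, j)} := by
      ext c
      simp only [Finset.mem_filter, Finset.mem_singleton]
      constructor
      · rintro ⟨hc, hck⟩
        exact A.hookT_unique h22 h2 hc hij hck hval
      · rintro rfl
        exact ⟨hij, hval⟩
    rw [this, Finset.card_singleton]
  · -- no entries exceed numRows
    rw [Finset.card_eq_zero]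
    apply Finset.filter_eq_empty_iff.mpr
    intro c hc hck
    have hle := A.hookT_le hc
    have := A.rnk_le_numRows c.1
    omega

end SkewShape
namespace SkewShape

variable (A : SkewShape)

lemma hookT_isLR (hrib : A.Ribbon) : A.IsLR A.hookT := by
  have h22 := hrib.2
  have hne := A.rowSet_nonempty hrib.1
  refine ⟨A.hookT_isSsyt h22, ?_⟩
  intro d hd k
  by_cases hE : (A.cells.filter fun c => A.hookT c = k + 2 ∧ ReadsBefore c d).Nonempty
  · obtain ⟨b, hbm⟩ := hE
    rw [Finset.mem_filter] at hbm
    obtain ⟨hbc, hbv, hbr⟩ := hbm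
    -- b is a nontop box with rank k+2
    have hbnt : b.1 ≠ 0 ∧ (b.1 - 1, b.2) ∈ A.cells := by
      by_contra h
      rw [A.hookT_of_top hbc h] at hbv; omega
    have hbrk : A.rnk b.1 = k + 2 := by
      rw [A.hookT_of_nontop hbc hbnt.1 hbnt.2] at hbv; exact hbv
    -- LHS has at most one element
    have hLHS : (A.cells.filter fun c => A.hookT c = k + 2 ∧ ReadsBefore c d).card ≤ 1 := by
      apply Finset.card_le_one.mpr
      intro x hx y hy
      rw [Finset.mem_filter] at hx hy
      exact A.hookT_unique h22 (by omega) hx.1 hy.1 hx.2.1 hy.2.1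
    -- produce a witness with entry k+1 in an earlier row
    have hwit : ∃ c', c' ∈ A.cells ∧ A.hookT c' = k + 1 ∧ c'.1 < b.1 := by
      rcases Nat.eq_zero_or_pos k with rfl | hk
      · -- witness: the box directly above b
        refine ⟨(b.1 - 1, b.2), hbnt.2, ?_, by omega⟩
        apply A.hookT_of_top hbnt.2
        rintro ⟨h0, ha⟩
        -- then rnk b.1 ≥ 3, contradicting rnk b.1 = 2
        have m1 : b.1 - 1 - 1 ∈ A.rowSet := A.fst_mem_rowSet ha
        have m2 : b.1 - 1 ∈ A.rowSet := A.fst_mem_rowSet hbnt.2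
        have m3 : b.1 ∈ A.rowSet := A.fst_mem_rowSet hbc
        have r1 := A.rnk_pos m1
        have r2 := A.rnk_strict_mono m2 (show b.1 - 1 - 1 < b.1 - 1 by omega)
        have r3 := A.rnk_strict_mono m3 (show b.1 - 1 < b.1 by omega)
        omega
      · -- witness: the nontop box of the row of rank k+1
        obtain ⟨i', hi', hlt, hr⟩ := A.rnk_pred (A.fst_mem_rowSet hbc) (by omega)
        have hri' : A.rnk i' = k + 1 := by omega
        have hnei : i' ≠ A.rowSet.min' hne := by
          intro h
          rw [h, A.rnk_min hne] at hri'
          omega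
        obtain ⟨j, hij, h0, ha⟩ := A.nontop_exists hrib.1 hi' hnei
        refine ⟨(i', j), hij, ?_, hlt⟩
        rw [A.hookT_of_nontop hij h0 ha]
        exact hri'
    obtain ⟨c', hc'm, hc'v, hc'lt⟩ := hwit
    have hc'rb : ReadsBefore c' d := by
      left
      rcases hbr with h | h
      · omega
      · omega
    have hRHS : 1 ≤ (A.cells.filter fun c => A.hookT c = k + 1 ∧ ReadsBefore c d).card :=
      Finset.card_pos.mpr ⟨c', Finset.mem_filter.mpr ⟨hc'm, hc'v, hc'rb⟩⟩
    omega
  · rw [Finset.not_nonempty_iff_eq_empty] at hE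
    rw [hE, Finset.card_empty]
    exact Nat.zero_le _

/-- A ribbon with `r` rows and `c` columns has `r + c - 1` boxes. -/
lemma size_succ (hrib : A.Ribbon) : A.size + 1 = A.numRows + A.numCols := by
  have h22 := hrib.2
  have hne := A.rowSet_nonempty hrib.1
  have hsplit : (A.cells.filter (fun c => ¬ (c.1 ≠ 0 ∧ (c.1 - 1, c.2) ∈ A.cells))).card
      + (A.cells.filter (fun c => ¬ ¬ (c.1 ≠ 0 ∧ (c.1 - 1, c.2) ∈ A.cells))).card
      = A.cells.card := Finset.card_filter_add_card_filter_not _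
  -- tops count: numCols
  have htops : (A.cells.filter (fun c => ¬ (c.1 ≠ 0 ∧ (c.1 - 1, c.2) ∈ A.cells))).card
      = A.numCols := by
    have h1 := A.content_hookT_one hrib
    unfold content at h1
    rw [← h1]
    congr 1
    apply Finset.filter_congr
    intro c hc
    exact (A.hookT_eq_one_iff hc).symm
  -- nontops count: numRows - 1
  have hnontops : (A.cells.filter (fun c => ¬ ¬ (c.1 ≠ 0 ∧ (c.1 - 1, c.2) ∈ A.cells))).card + 1
      = A.numRows := by
    have hbij : (A.cells.filter (fun c => ¬ ¬ (c.1 ≠ 0 ∧ (c.1 - 1, c.2) ∈ A.cells))).card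
        = (A.rowSet.erase (A.rowSet.min' hne)).card := by
      apply Finset.card_bij (fun c _ => c.1)
      · intro c hcm
        rw [Finset.mem_filter, not_not] at hcm
        rw [Finset.mem_erase]
        refine ⟨?_, A.fst_mem_rowSet hcm.1⟩
        intro h
        have hmem : c.1 - 1 ∈ A.rowSet := A.fst_mem_rowSet hcm.2.2
        have := A.rowSet.min'_le _ hmem
        have hc0 := hcm.2.1
        omega
      · intro c hcm c' hcm' heq2
        rw [Finset.mem_filter, not_not] at hcm hcm'
        obtain ⟨c1, c2⟩ := c
        obtain ⟨c1', c2'⟩ := c'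
        have h1 : c1 = c1' := heq2
        subst h1
        have := A.nontop_unique h22 hcm.1 hcm'.1 hcm.2 hcm'.2
        rw [this]
      · intro i hi
        rw [Finset.mem_erase] at hi
        obtain ⟨j, hij, h0, ha⟩ := A.nontop_exists hrib.1 hi.2 hi.1
        exact ⟨(i, j), Finset.mem_filter.mpr ⟨hij, not_not.mpr ⟨h0, ha⟩⟩, rfl⟩
    rw [hbij, Finset.card_erase_of_mem (A.rowSet.min'_mem hne)]
    have hpos : 1 ≤ A.rowSet.card := Finset.card_pos.mpr hne
    unfold numRows
    omega
  unfold size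
  omega

end SkewShape
namespace SkewShape

variable (A : SkewShape)

lemma readsBefore_refl (d : ℕ × ℕ) : ReadsBefore d d := Or.inr ⟨rfl, le_rfl⟩

/-- In an LR filling, a box with entry `k+1` has at least `k+1` nonempty rows
weakly above it. -/
lemma entry_chain {T : ℕ × ℕ → ℕ} (hLR : A.IsLR T) :
    ∀ k, ∀ d ∈ A.cells, T d = k + 1 → k + 1 ≤ (A.rowSet.filter (· ≤ d.1)).card := by
  intro k
  induction k with
  | zero =>
    intro d hd _
    exact Finset.card_pos.mpr
      ⟨d.1, Finset.mem_filter.mpr ⟨A.fst_mem_rowSet hd, le_rfl⟩⟩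
  | succ k ih =>
    intro d hd hT
    have h := hLR.2 d hd k
    have hdm : d ∈ A.cells.filter (fun c => T c = k + 2 ∧ ReadsBefore c d) :=
      Finset.mem_filter.mpr ⟨hd, hT, readsBefore_refl d⟩
    have hpos : 0 < (A.cells.filter fun c => T c = k + 1 ∧ ReadsBefore c d).card :=
      lt_of_lt_of_le (Finset.card_pos.mpr ⟨d, hdm⟩) h
    obtain ⟨c, hcm⟩ := Finset.card_pos.mp hpos
    rw [Finset.mem_filter] at hcm
    obtain ⟨hcc, hcv, hcr⟩ := hcm
    have hlt : c.1 < d.1 := by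
      rcases hcr with h' | ⟨heq, hle⟩
      · exact h'
      · exfalso
        obtain ⟨c1, c2⟩ := c
        obtain ⟨d1, d2⟩ := d
        have heq' : c1 = d1 := heq
        subst heq'
        have := hLR.1.2.1 c1 d2 c2 hd hcc hle
        omega
    have hsub : A.rowSet.filter (· ≤ c.1) ⊆ (A.rowSet.filter (· ≤ d.1)).erase d.1 := by
      intro x hx
      rw [Finset.mem_filter] at hx
      rw [Finset.mem_erase, Finset.mem_filter]
      exact ⟨by omega, hx.1, by omega⟩
    have h1 := le_trans (ih c hcc hcv) (Finset.card_le_card hsub)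
    have hdmem : d.1 ∈ A.rowSet.filter (· ≤ d.1) :=
      Finset.mem_filter.mpr ⟨A.fst_mem_rowSet hd, le_rfl⟩
    have h2 := Finset.card_erase_of_mem hdmem
    have h3 := Finset.card_pos.mpr ⟨d.1, hdmem⟩
    omega

lemma entry_le_numRows {T : ℕ × ℕ → ℕ} (hLR : A.IsLR T) {d : ℕ × ℕ}
    (hd : d ∈ A.cells) : T d ≤ A.numRows := by
  have h1 : 1 ≤ T d := hLR.1.1 d hd
  have h2 := A.entry_chain hLR (T d - 1) d hd (by omega)
  have h3 : (A.rowSet.filter (· ≤ d.1)).card ≤ A.numRows :=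
    Finset.card_le_card (Finset.filter_subset _ _)
  omega

/-- In a semistandard filling, the number of 1's is at most the number of
nonempty columns. -/
lemma content_one_le {T : ℕ × ℕ → ℕ} (hS : A.IsSsyt T) :
    A.content T 1 ≤ A.numCols := by
  unfold content numCols
  apply Finset.card_le_card_of_injOn Prod.snd
  · intro c hc
    rw [Finset.mem_coe, Finset.mem_filter] at hc
    exact A.snd_mem_colSet hc.1
  · intro c hc c' hc' heq2
    simp only [Finset.coe_filter, Set.mem_setOf_eq] at hc hc'
    obtain ⟨c1, c2⟩ := c
    obtain ⟨c1', c2'⟩ := c'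
    have heq3 : c2 = c2' := heq2
    subst heq3
    rcases lt_trichotomy c1 c1' with h | h | h
    · have := hS.2.2 c1 c1' c2 hc.1 hc'.1 h
      omega
    · rw [h]
    · have := hS.2.2 c1' c1 c2 hc'.1 hc.1 h
      omega

lemma lrset_finite (lam : Multiset ℕ) : (A.LRset lam).Finite := by
  have hsub : A.LRset lam ⊆
      (fun f : (A.cells → Fin (A.numRows + 1)) => fun c : ℕ × ℕ =>
        if h : c ∈ A.cells then (f ⟨c, h⟩ : ℕ) else 0) '' Set.univ := by
    intro T hT
    refine ⟨fun c => ⟨T c, Nat.lt_succ_of_le (A.entry_le_numRows hT.1 c.2)⟩, trivial, ?_⟩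
    funext c
    by_cases h : c ∈ A.cells
    · simp [h]
    · simp [h, hT.2.1 c h]
  exact Set.Finite.subset (Set.finite_univ.image _) hsub

end SkewShape
namespace SkewShape

variable (A : SkewShape)

lemma colSet_nonempty (hc : A.Connected) : A.colSet.Nonempty :=
  ⟨hc.1.choose.2, A.snd_mem_colSet hc.1.choose_spec⟩

lemma sort_hookLam (h1 : 1 ≤ A.numCols) :
    Multiset.sort A.hookLam (· ≥ ·) = A.numCols :: List.replicate (A.numRows - 1) 1 := by
  refine List.Perm.eq_of_pairwise' (Multiset.pairwise_sort _ _) ?_ ?_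
  swap
  · rw [← Multiset.coe_eq_coe, Multiset.sort_eq]
    unfold hookLam
    rw [← Multiset.coe_replicate, Multiset.cons_coe]
  · rw [List.pairwise_cons]
    constructor
    · intro b hb
      rw [List.mem_replicate] at hb
      omega
    · exact List.pairwise_replicate.mpr (by simp)

lemma part_hookLam (h1 : 1 ≤ A.numCols) (i : ℕ) :
    part A.hookLam i = if i = 0 then A.numCols else if i < A.numRows then 1 else 0 := by
  unfold part
  rw [A.sort_hookLam h1]
  rcases i with _ | i
  · simp
  · simp only [List.getD_cons_succ]
    by_cases h : i < A.numRows - 1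
    · rw [if_neg (by omega), if_pos (by omega)]
      rw [List.getD_eq_getElem _ _ (by simpa using h)]
      simp
    · rw [if_neg (by omega), if_neg (by omega)]
      apply List.getD_eq_default
      simpa using h

lemma hook_mem (hrib : A.Ribbon) : A.hookT ∈ A.LRset A.hookLam := by
  have hcols : 1 ≤ A.numCols := Finset.card_pos.mpr (A.colSet_nonempty hrib.1)
  have hrows : 1 ≤ A.numRows := Finset.card_pos.mpr (A.rowSet_nonempty hrib.1)
  refine ⟨A.hookT_isLR hrib, fun c hc => by simp [hookT, hc], ?_⟩
  intro i
  rw [A.part_hookLam hcols i]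
  rcases i with _ | i
  · simpa using A.content_hookT_one hrib
  · rw [A.content_hookT_ge2 hrib (by omega), if_neg (Nat.succ_ne_zero i)]
    split_ifs <;> omega

lemma half_main (R R' : SkewShape) (hR : R.Ribbon) (hR' : R'.Ribbon)
    (hsz : R.size = R'.size) (h : R.numRows < R'.numRows) :
    ¬ R'.SchurPosDiff R ∧ ¬ R.SchurPosDiff R' := by
  have hcR : 1 ≤ R.numCols := Finset.card_pos.mpr (R.colSet_nonempty hR.1)
  have hcR' : 1 ≤ R'.numCols := Finset.card_pos.mpr (R'.colSet_nonempty hR'.1)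
  have hrR' : 1 ≤ R'.numRows := Finset.card_pos.mpr (R'.rowSet_nonempty hR'.1)
  have hsz1 := R.size_succ hR
  have hsz2 := R'.size_succ hR'
  have hcols : R'.numCols < R.numCols := by omega
  constructor
  · intro hpos
    have h1 : 0 < (R.LRset R.hookLam).ncard :=
      (Set.ncard_pos (R.lrset_finite _)).mpr ⟨_, R.hook_mem hR⟩
    have h2 : R'.LRset R.hookLam = ∅ := by
      rw [Set.eq_empty_iff_forall_notMem]
      intro T hT
      have hle := R'.content_one_le hT.1.1
      have hc0 := hT.2.2 0
      rw [R.part_hookLam hcR 0, if_pos rfl] at hc0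
      have hc0' : R'.content T 1 = R.numCols := by simpa using hc0
      omega
    have := hpos R.hookLam
    rw [h2, Set.ncard_empty] at this
    omega
  · intro hpos
    have h1 : 0 < (R'.LRset R'.hookLam).ncard :=
      (Set.ncard_pos (R'.lrset_finite _)).mpr ⟨_, R'.hook_mem hR'⟩
    have h2 : R.LRset R'.hookLam = ∅ := by
      rw [Set.eq_empty_iff_forall_notMem]
      intro T hT
      have hc0 := hT.2.2 (R'.numRows - 1)
      rw [R'.part_hookLam hcR' (R'.numRows - 1)] at hc0
      have hpos0 : 0 < R.content T (R'.numRows - 1 + 1) := by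
        rw [hc0]
        split_ifs <;> omega
      unfold content at hpos0
      obtain ⟨d, hdm⟩ := Finset.card_pos.mp hpos0
      rw [Finset.mem_filter] at hdm
      have := R.entry_le_numRows hT.1 hdm.1
      omega
    have := hpos R'.hookLam
    rw [h2, Set.ncard_empty] at this
    omega

end SkewShape
/-- If `R` and `R'` are ribbons, each with `N` boxes, having
different numbers of nonempty rows, then neither `s_R − s_{R'}` nor
`s_{R'} − s_R` is Schur-positive. -/
theorem ribbons_diff_rows_schurpos_incomparable (N : ℕ) (R R' : SkewShape)
    (hR : R.Ribbon) (hR' : R'.Ribbon) (hs : R.size = N) (hs' : R'.size = N)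
    (hrows : R.numRows ≠ R'.numRows) :
    ¬ R.SchurPosDiff R' ∧ ¬ R'.SchurPosDiff R := by
  have hsz : R.size = R'.size := by omega
  rcases Nat.lt_or_ge R.numRows R'.numRows with h | h
  · exact (SkewShape.half_main R R' hR hR' hsz h).symm
  · have h' : R'.numRows < R.numRows := by omega
    exact SkewShape.half_main R' R hR' hR hsz.symm h'
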